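/- Let n ≥ 2 and let w₁, w₂ ∈ ℂⁿ be unit vectors such that ⟨w₁, w₂⟩ := Σᵢ conj(w₁ᵢ) w₂ᵢ is a real number t, and let A := w₁ w₁ᵀ + w₂ w₂ᵀ. Let σ₀ and σ₁ denote respectively the largest and second largest singular values of A (counted with multiplicity). Then σ₀ > 0 and the quotient satisfies σ₁ / σ₀ = (1 − |Re⟨w₁, w₂⟩|) / (1 + |Re⟨w₁, w₂⟩|). -/

import Mathlib

/-! Write `A = W Wᵀ` with `W = [w₁ w₂]`. Then `Aᴴ A = W̄ G Wᵀ` with `G = Wᴴ W = !![1, t; t, 1]`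
the Gram matrix, and cycling the factors shows that `Aᴴ A` has the same nonzero eigenvalues as
`G Gᵀ = G²`, namely `(1 + |t|)²` and `(1 - |t|)²`. So the singular values of `A` are `1 + |t|`,
`1 - |t|` and `n - 2` zeros, and since `σ` lists them in decreasing order, `σ₀ = 1 + |t|` and
`σ₁ = 1 - |t|`. -/

open Polynomial Matrix

namespace Matrix

theorem charpoly_conjTranspose_mul_self_of_eq_mul_transpose {R m n : Type*} [CommRing R]
    [StarRing R] [Fintype m] [Fintype n] [DecidableEq m] [DecidableEq n]
    {A : Matrix n n R} {W : Matrix n m R} (hA : A = W * Wᵀ)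
    (hmn : Fintype.card m ≤ Fintype.card n) :
    (Aᴴ * A).charpoly =
      X ^ (Fintype.card n - Fintype.card m) * (Wᴴ * W * (Wᴴ * W)ᵀ).charpoly := by
  have hfactor : Aᴴ * A = Wᵀᴴ * (Wᴴ * W * Wᵀ) := by
    simp only [hA, conjTranspose_mul, Matrix.mul_assoc]
  rw [hfactor, charpoly_mul_comm_of_le _ _ hmn, transpose_mul, Matrix.mul_assoc]
  rfl

theorem charpoly_circulant_fin_two {R : Type*} [CommRing R] [Nontrivial R] (a b : R) :
    (!![a, b; b, a]).charpoly = (X - C (a + b)) * (X - C (a - b)) := by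
  rw [charpoly_fin_two, trace_fin_two_of, det_fin_two_of]
  simp only [map_add, map_sub, map_mul]
  ring

theorem gram_pair_of_norm_eq_one {𝕜 E : Type*} [RCLike 𝕜] [SeminormedAddCommGroup E]
    [InnerProductSpace 𝕜 E] {v w : E} (hv : ‖v‖ = 1) (hw : ‖w‖ = 1) {t : ℝ}
    (ht : inner 𝕜 v w = (t : 𝕜)) :
    gram 𝕜 ![v, w] = !![1, (t : 𝕜); (t : 𝕜), 1] := by
  have ht' : inner 𝕜 w v = (t : 𝕜) := by rw [← inner_conj_symm, ht, RCLike.conj_ofReal]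
  ext i j
  fin_cases i <;> fin_cases j <;> simp [ht, ht', hv, hw]

end Matrix

theorem charpoly_circulant_one_ofReal_mul_transpose (t : ℝ) :
    (!![1, (t : ℂ); (t : ℂ), 1] * !![1, (t : ℂ); (t : ℂ), 1]ᵀ).charpoly =
      (X - C (((1 + |t| : ℝ) : ℂ) ^ 2)) * (X - C (((1 - |t| : ℝ) : ℂ) ^ 2)) := by
  have hsq : !![1, (t : ℂ); (t : ℂ), 1] * !![1, (t : ℂ); (t : ℂ), 1]ᵀ =
      !![1 + (t : ℂ) ^ 2, 2 * (t : ℂ); 2 * (t : ℂ), 1 + (t : ℂ) ^ 2] := by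
    ext i j
    fin_cases i <;> fin_cases j <;>
      simp only [mul_apply, transpose_apply, of_apply, cons_val', cons_val_fin_one, cons_val_zero,
        cons_val_one, Fin.sum_univ_two, Fin.zero_eta, Fin.mk_one, Fin.isValue, one_mul, mul_one] <;>
      ring
  rw [hsq, charpoly_circulant_fin_two]
  rcases abs_cases t with ⟨habs, -⟩ | ⟨habs, -⟩ <;> rw [habs] <;> push_cast <;> ring_nf

theorem univ_val_map_eq_of_prod_X_sub_C_sq_eq {ι : Type*} [Fintype ι] {σ : ι → ℝ}
    (hσ : ∀ i, 0 ≤ σ i) {s : Multiset ℝ} (hs : ∀ x ∈ s, 0 ≤ x)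
    (h : ∏ i, (X - C ((σ i : ℂ) ^ 2)) = (s.map fun x : ℝ => X - C ((x : ℂ) ^ 2)).prod) :
    Finset.univ.val.map σ = s := by
  have hroots : Finset.univ.val.map (fun i => (σ i : ℂ) ^ 2) = s.map fun x : ℝ => (x : ℂ) ^ 2 := by
    rw [← roots_multiset_prod_X_sub_C (Finset.univ.val.map _),
      ← roots_multiset_prod_X_sub_C (s.map _), Multiset.map_map, Multiset.map_map]
    exact congrArg roots h
  have hsqrt : ∀ x : ℝ, 0 ≤ x → √((x : ℂ) ^ 2).re = x := fun x hx => by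
    rw [← Complex.ofReal_pow, Complex.ofReal_re, Real.sqrt_sq hx]
  calc Finset.univ.val.map σ
      = (Finset.univ.val.map fun i => (σ i : ℂ) ^ 2).map fun z => √z.re := by
        rw [Multiset.map_map]; exact Multiset.map_congr rfl fun i _ => (hsqrt _ (hσ i)).symm
    _ = s := by
        rw [hroots, Multiset.map_map]
        exact (Multiset.map_congr rfl fun x hx => hsqrt x (hs x hx)).trans (Multiset.map_id s)

theorem List.ofFn_eq_of_antitone {α : Type*} [LinearOrder α] {n : ℕ} {f : Fin n → α}
    (hf : Antitone f) {l : List α} (hl : l.SortedGE) (h : Finset.univ.val.map f = l) :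
    List.ofFn f = l :=
  List.Perm.eq_of_sortedGE hf.sortedGE_ofFn hl
    (Multiset.coe_eq_coe.mp (by rwa [Fin.univ_val_map] at h))

theorem List.ofFn_eq_of_prod_X_sub_C_sq_eq {k : ℕ} {σ : Fin (k + 2) → ℝ}
    (hσ_anti : Antitone σ) (hσ_nonneg : ∀ i, 0 ≤ σ i) {p q : ℝ} (hq : 0 ≤ q) (hqp : q ≤ p)
    (h : ∏ i, (X - C ((σ i : ℂ) ^ 2)) =
      X ^ k * ((X - C ((p : ℂ) ^ 2)) * (X - C ((q : ℂ) ^ 2)))) :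
    List.ofFn σ = p :: q :: List.replicate k 0 := by
  have hmultiset : Finset.univ.val.map σ = p ::ₘ q ::ₘ Multiset.replicate k 0 := by
    refine univ_val_map_eq_of_prod_X_sub_C_sq_eq hσ_nonneg ?_ ?_
    · simp only [Multiset.mem_cons, Multiset.mem_replicate]
      rintro x (rfl | rfl | ⟨-, rfl⟩) <;> linarith
    · rw [h]
      simp only [Multiset.map_cons, Multiset.map_replicate, Multiset.prod_cons,
        Multiset.prod_replicate, Complex.ofReal_zero, zero_pow two_ne_zero, map_zero, sub_zero]
      ring
  have hsorted : (p :: q :: List.replicate k 0).SortedGE := by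
    simp only [List.sortedGE_iff_pairwise, List.pairwise_cons, List.mem_cons, List.mem_replicate,
      List.pairwise_replicate]
    refine ⟨?_, ?_, .inr le_rfl⟩
    · rintro x (rfl | ⟨-, rfl⟩) <;> linarith
    · rintro x ⟨-, rfl⟩
      exact hq
  exact List.ofFn_eq_of_antitone hσ_anti hsorted hmultiset

/-- For unit vectors `w₁, w₂ ∈ ℂⁿ` (`n ≥ 2`) whose Hermitian inner product is a real
number `t`, and `A = w₁ w₁ᵀ + w₂ w₂ᵀ`: if `σ : Fin n → ℝ` enumerates the singular values
of `A` in decreasing order (i.e. `σ` is antitone, nonnegative, and the characteristic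
polynomial of `Aᴴ A` is `∏ i, (X − σᵢ²)`), then the largest singular value `σ₀` is
positive and `σ₁ / σ₀ = (1 − |Re⟨w₁, w₂⟩|) / (1 + |Re⟨w₁, w₂⟩|)`. -/
theorem singular_value_ratio_two_scatterers (n : ℕ) (hn : 2 ≤ n)
    (w₁ w₂ : EuclideanSpace ℂ (Fin n)) (h1 : ‖w₁‖ = 1) (h2 : ‖w₂‖ = 1)
    (t : ℝ) (ht : (inner ℂ w₁ w₂ : ℂ) = (t : ℂ))
    (A : Matrix (Fin n) (Fin n) ℂ)
    (hA : A = Matrix.of (fun i j => w₁ i * w₁ j) + Matrix.of (fun i j => w₂ i * w₂ j))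
    (σ : Fin n → ℝ) (hσ_anti : Antitone σ) (hσ_nonneg : ∀ i, 0 ≤ σ i)
    (hσ : (Aᴴ * A).charpoly = ∏ i, (X - C ((σ i : ℂ) ^ 2))) :
    0 < σ ⟨0, by omega⟩ ∧
    σ ⟨1, by omega⟩ / σ ⟨0, by omega⟩ =
      (1 - |(inner ℂ w₁ w₂ : ℂ).re|) / (1 + |(inner ℂ w₁ w₂ : ℂ).re|) := by
  obtain ⟨k, rfl⟩ : ∃ k, n = k + 2 := ⟨n - 2, by omega⟩
  have ht_le : |t| ≤ 1 := by
    simpa [ht, h1, h2] using norm_inner_le_norm (𝕜 := ℂ) w₁ w₂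
  set W : Matrix (Fin (k + 2)) (Fin 2) ℂ := of fun i j => ![w₁, w₂] j i
  have hAW : A = W * Wᵀ := by
    ext i j
    simp [hA, W, mul_apply, Fin.sum_univ_two]
  have hgram : Wᴴ * W = !![1, (t : ℂ); (t : ℂ), 1] :=
    (gram_eq_conjTranspose_mul (EuclideanSpace.basisFun _ ℂ) _).symm.trans
      (gram_pair_of_norm_eq_one h1 h2 ht)
  have hcharpoly := charpoly_conjTranspose_mul_self_of_eq_mul_transpose hAW (by simp)
  rw [hgram, charpoly_circulant_one_ofReal_mul_transpose, hσ, Fintype.card_fin, Fintype.card_fin,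
    Nat.add_sub_cancel] at hcharpoly
  have hσ_list := List.ofFn_eq_of_prod_X_sub_C_sq_eq (p := 1 + |t|) (q := 1 - |t|) hσ_anti
    hσ_nonneg (by linarith) (by linarith [abs_nonneg t]) hcharpoly
  rw [List.ofFn_succ, List.ofFn_succ, List.cons.injEq, List.cons.injEq] at hσ_list
  obtain ⟨hσ₀, hσ₁, -⟩ := hσ_list
  rw [ht, Complex.ofReal_re]
  exact ⟨hσ₀ ▸ by positivity, by rw [← hσ₀, ← hσ₁]; rfl⟩
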